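/- arXiv:2007.15851 — 5 statements merged into one kernel-verified Lean document; each statement's English description precedes it below -/
import Mathlib

section
/- For integers n ≥ k ≥ 0 and real (or integer) q ≥ 4, the Gaussian binomial coefficient [n choose k]_q is at most (1 + 2/q)·q^{k(n-k)}. -/
/-- Gaussian binomial coefficient `[n choose k]_q` as a real number,
with the convention that it is `0` for `k < 0` (and for `k > n`). -/
noncomputable def gbin (q n : ℕ) (k : ℤ) : ℝ :=
  if 0 ≤ k then ∏ i ∈ Finset.range k.toNat, ((q:ℝ)^(n-i) - 1)/((q:ℝ)^(i+1) - 1) else 0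

/-- `θ_m = (q^{m+1}-1)/(q-1)`, the number of points of `PG(m,q)`. -/
noncomputable def theta (q m : ℕ) : ℝ := ((q:ℝ)^(m+1) - 1)/((q:ℝ) - 1)

/-!
With `x = 1/q`, dropping the `-1` in each numerator gives
`[n choose k]_q ≤ q^{k(n-k)} / ∏_{i<k} (1 - x^{i+1})`. The Weierstrass product inequality and
the geometric series bound the denominator below by `1 - x/(1-x) = (1-2x)/(1-x)`, and
`(1-x)/(1-2x) ≤ 1 + 2x` holds exactly when `x ≤ 1/4`.
-/

open Finset

theorem Finset.one_sub_sum_le_prod_one_sub {ι R : Type*} [LinearOrder ι] [CommRing R]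
    [PartialOrder R] [IsOrderedRing R] (s : Finset ι) (f : ι → R)
    (hf₀ : ∀ i ∈ s, 0 ≤ f i) (hf₁ : ∀ i ∈ s, f i ≤ 1) :
    1 - ∑ i ∈ s, f i ≤ ∏ i ∈ s, (1 - f i) := by
  rw [prod_one_sub_ordered]
  gcongr with i hi
  have hle : ∏ j ∈ s with j < i, (1 - f j) ≤ 1 :=
    prod_le_one (fun j hj => sub_nonneg.2 (hf₁ j (mem_filter.1 hj).1))
      (fun j hj => sub_le_self _ (hf₀ j (mem_filter.1 hj).1))
  simpa using mul_le_mul_of_nonneg_left hle (hf₀ i hi)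

theorem one_sub_div_one_sub_le_prod_one_sub_pow {K : Type*} [Field K] [LinearOrder K]
    [IsStrictOrderedRing K] {x : K} (hx₀ : 0 ≤ x) (hx₁ : x < 1) (k : ℕ) :
    1 - x / (1 - x) ≤ ∏ i ∈ range k, (1 - x ^ (i + 1)) := by
  have hsum : ∑ i ∈ range k, x ^ (i + 1) ≤ x / (1 - x) := by
    simpa [sum_Ico_eq_sum_range, add_comm] using
      geom_sum_Ico_le_of_lt_one (m := 1) (n := k + 1) hx₀ hx₁
  calc 1 - x / (1 - x) ≤ 1 - ∑ i ∈ range k, x ^ (i + 1) := by gcongr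
    _ ≤ _ := one_sub_sum_le_prod_one_sub _ _ (fun i _ => pow_nonneg hx₀ _)
      (fun i _ => pow_le_one₀ hx₀ hx₁.le)

theorem prod_range_pow_sub_div_pow_succ {G : Type*} [CommGroupWithZero G] {q : G} (hq : q ≠ 0)
    {n k : ℕ} (hk : k ≤ n) :
    ∏ i ∈ range k, q ^ (n - i) / q ^ (i + 1) = q ^ (k * (n - k)) := by
  induction k with
  | zero => simp
  | succ k ih =>
    obtain ⟨m, rfl⟩ : ∃ m, n = k + 1 + m := ⟨n - (k + 1), by omega⟩
    rw [prod_range_succ, ih (by omega), show k + 1 + m - k = m + 1 by omega,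
      show k + 1 + m - (k + 1) = m by omega, mul_div_assoc', div_eq_iff (pow_ne_zero _ hq),
      ← pow_add, ← pow_add]
    ring_nf

theorem gbin_le_pow_div_prod {q n k : ℕ} (hq : 1 < q) (hk : k ≤ n) :
    gbin q n k ≤ (q : ℝ) ^ (k * (n - k)) / ∏ i ∈ range k, (1 - (q : ℝ)⁻¹ ^ (i + 1)) := by
  have hq' : (1 : ℝ) < q := by exact_mod_cast hq
  have hden (i : ℕ) : 0 < (q : ℝ) ^ (i + 1) - 1 := sub_pos.2 (one_lt_pow₀ hq' (by omega))
  rw [← prod_range_pow_sub_div_pow_succ (by positivity) hk, ← prod_div_distrib, gbin,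
    if_pos (by positivity), Int.toNat_natCast]
  refine prod_le_prod (fun i _ => div_nonneg (sub_nonneg.2 (one_le_pow₀ hq'.le)) (hden i).le)
    fun i _ => ?_
  have hfactor : 1 - (q : ℝ)⁻¹ ^ (i + 1) = ((q : ℝ) ^ (i + 1) - 1) / (q : ℝ) ^ (i + 1) := by
    rw [inv_pow]
    field_simp
  rw [hfactor, div_div_div_cancel_right₀ (by positivity)]
  gcongr
  · exact (hden i).le
  · exact sub_le_self _ zero_le_one

theorem inv_one_sub_div_one_sub_le {K : Type*} [Field K] [LinearOrder K] [IsStrictOrderedRing K]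
    {x : K} (hx₀ : 0 ≤ x) (hx : x ≤ 4⁻¹) : (1 - x / (1 - x))⁻¹ ≤ 1 + 2 * x := by
  have h₁ : 0 < 1 - x := by linarith
  have h₂ : 0 < 1 - 2 * x := by linarith
  rw [show 1 - x / (1 - x) = (1 - 2 * x) / (1 - x) by field_simp; ring, inv_div,
    div_le_iff₀ h₂]
  nlinarith

theorem stmt_2 (q n k : ℕ) (hq : 4 ≤ q) (hk : k ≤ n) :
    gbin q n (k:ℤ) ≤ (1 + 2/(q:ℝ)) * (q:ℝ)^(k*(n-k)) := by
  have hq' : (4 : ℝ) ≤ q := by exact_mod_cast hq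
  set x : ℝ := (q : ℝ)⁻¹
  have hx₀ : 0 ≤ x := by positivity
  have hx : x ≤ 4⁻¹ := inv_anti₀ (by norm_num) hq'
  have hlower : 0 < 1 - x / (1 - x) := by
    rw [sub_pos, div_lt_one (by linarith)]
    linarith
  calc gbin q n k ≤ (q : ℝ) ^ (k * (n - k)) / ∏ i ∈ range k, (1 - x ^ (i + 1)) :=
        gbin_le_pow_div_prod (by omega) hk
    _ ≤ (q : ℝ) ^ (k * (n - k)) / (1 - x / (1 - x)) := by
        gcongr
        exact one_sub_div_one_sub_le_prod_one_sub_pow hx₀ (by linarith) k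
    _ = (q : ℝ) ^ (k * (n - k)) * (1 - x / (1 - x))⁻¹ := div_eq_mul_inv _ _
    _ ≤ (q : ℝ) ^ (k * (n - k)) * (1 + 2 * x) := by
        gcongr
        exact inv_one_sub_div_one_sub_le hx₀ hx
    _ = (1 + 2 / (q : ℝ)) * (q : ℝ) ^ (k * (n - k)) := by
        rw [div_eq_mul_inv 2]
        ring
end

section
/- For integers n > k > 0 and q ≥ 2, the Gaussian binomial coefficient [n choose k]_q is at least (1 + 1/q)·q^{k(n-k)}. -/
theorem stmt_3 (q n k : ℕ) (hq : 2 ≤ q) (hk0 : 0 < k) (hkn : k < n) :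
    (1 + 1/(q:ℝ)) * (q:ℝ)^(k*(n-k)) ≤ gbin q n (k:ℤ) := by
  have hq1 : (1:ℝ) < (q:ℝ) := by exact_mod_cast lt_of_lt_of_le one_lt_two (by exact_mod_cast hq)
  have hq0 : (0:ℝ) < (q:ℝ) := by linarith
  rw [gbin, if_pos (by positivity)]
  simp only [Int.toNat_natCast]
  have hnum : ∏ i ∈ Finset.range k, ((q:ℝ)^(n-i) - 1)
      = ∏ i ∈ Finset.range k, ((q:ℝ)^(n-k+1+i) - 1) := by
    rw [← Finset.prod_range_reflect]
    refine Finset.prod_congr rfl fun i hi => ?_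
    simp only [Finset.mem_range] at hi
    congr 2
    omega
  have hprod : ∏ i ∈ Finset.range k, ((q:ℝ)^(n-i) - 1)/((q:ℝ)^(i+1) - 1)
      = ∏ i ∈ Finset.range k, ((q:ℝ)^(n-k+1+i) - 1)/((q:ℝ)^(i+1) - 1) := by
    rw [Finset.prod_div_distrib, Finset.prod_div_distrib, hnum]
  rw [hprod]
  have hden : ∀ i : ℕ, (0:ℝ) < (q:ℝ)^(i+1) - 1 := fun i => by
    have : (1:ℝ) < (q:ℝ)^(i+1) := one_lt_pow₀ hq1 (by omega)
    linarith
  have hone : (1:ℝ) ≤ (q:ℝ)^(n-k-1) := one_le_pow₀ (le_of_lt hq1)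
  have key : ∀ i ∈ Finset.range k,
      (if i = 0 then (1+1/(q:ℝ)) * (q:ℝ)^(n-k) else (q:ℝ)^(n-k))
        ≤ ((q:ℝ)^(n-k+1+i) - 1)/((q:ℝ)^(i+1) - 1) := by
    intro i hi
    rw [le_div_iff₀ (hden i)]
    by_cases h0 : i = 0
    · subst h0
      simp only [if_pos rfl, if_true]
      obtain ⟨b, hb⟩ : ∃ b, n - k = b + 1 := ⟨n - k - 1, by omega⟩
      have hb1 : (1:ℝ) ≤ (q:ℝ)^b := one_le_pow₀ (le_of_lt hq1)
      rw [hb]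
      have : (1 + 1/(q:ℝ)) * (q:ℝ)^(b+1) = (q:ℝ)^(b+1) + (q:ℝ)^b := by
        field_simp
        ring
      rw [this]
      have e1 : (q:ℝ)^(b+1+1+0) = (q:ℝ)^(b+1) * (q:ℝ) := by
        rw [← pow_succ]
      have e2 : (q:ℝ)^(b+1) = (q:ℝ)^b * (q:ℝ) := by rw [pow_succ]
      have e0 : (q:ℝ)^(0+1) = (q:ℝ) := pow_one _
      rw [e0, e1, e2]
      nlinarith [hb1, hq1]
    · simp only [if_neg h0]
      have e1 : (q:ℝ)^(n-k+1+i) = (q:ℝ)^(n-k) * (q:ℝ)^(i+1) := by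
        rw [← pow_add]; congr 1; omega
      have h1 : (1:ℝ) ≤ (q:ℝ)^(n-k) := one_le_pow₀ (le_of_lt hq1)
      nlinarith
  refine le_trans (le_of_eq ?_) (Finset.prod_le_prod (fun i _ => by positivity) key)
  obtain ⟨m, rfl⟩ : ∃ m, k = m + 1 := ⟨k - 1, by omega⟩
  rw [Finset.prod_range_succ']
  simp only [Nat.succ_ne_zero, if_false, if_true, ite_true, ite_false, Finset.prod_const, Finset.card_range]
  rw [← pow_mul]
  have : (m+1) * (n - (m+1)) = (n - (m+1)) * m + (n - (m+1)) := by ring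
  rw [this, pow_add]
  ring
end

section
/- For integers n > 2k - t with t + 1 < k < 2t + 2 and q ≥ 3: [n-t-2 choose k-t-2]_q · (1 + θ_{t+2}·q^{k-t-1}·(q^{n-k}-1)/(q^{k-t-1}-1)) > θ_{k+1} + Σ_{j=0}^{k-t-2} [k-t+1 choose j+1]_q · q^{(k-t-j)(k-t-j-1)} · [n-k-1 choose k-t-j-1]_q. -/
open Finset

private lemma aux_gprod_pos {Q : ℝ} (hQ : 3 ≤ Q) (b : ℕ) :
    0 < ∏ i ∈ range b, (Q ^ (i+1) - 1) := by
  apply Finset.prod_pos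
  intro i _
  have h1 : Q ≤ Q ^ (i+1) := by
    calc Q = Q^1 := (pow_one Q).symm
    _ ≤ Q^(i+1) := pow_le_pow_right₀ (by linarith) (by omega)
  linarith

private lemma aux_hg {Q : ℝ} (hQ : 3 ≤ Q) (b : ℕ) :
    ∏ i ∈ range b, Q ^ (i+1) ≤ 2 * ∏ i ∈ range b, (Q ^ (i+1) - 1) := by
  have hQ1 : (1:ℝ) ≤ Q := by linarith
  have key : ∀ b : ℕ, (Q^b + 1) * ∏ i ∈ range b, Q ^ (i+1)
      ≤ 2 * Q^b * ∏ i ∈ range b, (Q ^ (i+1) - 1) := by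
    intro b
    induction b with
    | zero => norm_num
    | succ b ih =>
      have hG : 0 < ∏ i ∈ range b, (Q ^ (i+1) - 1) := aux_gprod_pos hQ b
      have hH : 0 < ∏ i ∈ range b, Q ^ (i+1) := prod_pos (fun i _ => by positivity)
      have hx : (1:ℝ) ≤ Q^b := one_le_pow₀ hQ1
      rw [prod_range_succ, prod_range_succ, pow_succ]
      set x := Q^b with hxdef
      set G := ∏ i ∈ range b, (Q ^ (i+1) - 1) with hGdef
      set H := ∏ i ∈ range b, Q ^ (i+1) with hHdef
      have h5 : 0 ≤ x*Q - 2*x - 1 := by nlinarith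
      have expand : 2*(x*Q)*(G*(x*Q-1)) * (x+1)
          = (x*Q*(x*Q+1)) * (2*x*G) + (2*x*Q*G)*(x*Q-2*x-1) := by ring
      have expand2 : (x*Q+1)*(H*(x*Q))*(x+1) = (x*Q*(x*Q+1))*((x+1)*H) := by ring
      have hmul : (x*Q*(x*Q+1)) * ((x+1)*H) ≤ (x*Q*(x*Q+1)) * (2*x*G) :=
        mul_le_mul_of_nonneg_left ih (by positivity)
      have h6 : 0 ≤ (2*x*Q*G)*(x*Q-2*x-1) := by positivity
      have : (x*Q+1)*(H*(x*Q))*(x+1) ≤ 2*(x*Q)*(G*(x*Q-1)) * (x+1) := by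
        rw [expand, expand2]; linarith
      have hx1 : (0:ℝ) < x + 1 := by linarith
      exact le_of_mul_le_mul_right this hx1
  have hx : (0:ℝ) < Q^b := by positivity
  have := key b
  nlinarith [this, (prod_pos (fun i (_ : i ∈ range b) => by positivity : ∀ i ∈ range b, (0:ℝ) < Q^(i+1)))]

private lemma gbin_eq (q a b : ℕ) : gbin q a (b:ℤ) =
    (∏ i ∈ range b, ((q:ℝ)^(a-i) - 1)) / (∏ i ∈ range b, ((q:ℝ)^(i+1) - 1)) := by
  rw [gbin, if_pos (Int.natCast_nonneg b), Int.toNat_natCast, Finset.prod_div_distrib]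

private lemma aux_num_eq {q : ℕ} {a b : ℕ} (hba : b ≤ a) :
    ∏ i ∈ range b, ((q:ℝ)^(a-i) - 1) = ∏ i ∈ range b, ((q:ℝ)^(a-b) * (q:ℝ)^(i+1) - 1) := by
  rw [← prod_range_reflect (fun i => (q:ℝ)^(a-i) - 1) b]
  apply prod_congr rfl
  intro i hi
  simp only [mem_range] at hi
  rw [← pow_add]
  congr 2
  omega

private lemma gbin_le {q : ℕ} (hq : 3 ≤ q) {a b : ℕ} (hba : b ≤ a) :
    gbin q a (b:ℤ) ≤ 2 * (q:ℝ)^(b*(a-b)) := by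
  have hQ : (3:ℝ) ≤ (q:ℝ) := by exact_mod_cast hq
  have hQ1 : (1:ℝ) ≤ (q:ℝ) := by linarith
  rw [gbin_eq, aux_num_eq hba]
  have hg := aux_gprod_pos hQ b
  rw [div_le_iff₀ hg]
  have hN : ∏ i ∈ range b, ((q:ℝ)^(a-b) * (q:ℝ)^(i+1) - 1)
      ≤ ∏ i ∈ range b, ((q:ℝ)^(a-b) * (q:ℝ)^(i+1)) := by
    apply prod_le_prod
    · intro i _
      have h1 : (1:ℝ) ≤ (q:ℝ)^(a-b) := one_le_pow₀ hQ1
      have h2 : (1:ℝ) ≤ (q:ℝ)^(i+1) := one_le_pow₀ hQ1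
      nlinarith
    · intro i _; linarith
  have hsplit : ∏ i ∈ range b, ((q:ℝ)^(a-b) * (q:ℝ)^(i+1))
      = (q:ℝ)^(b*(a-b)) * ∏ i ∈ range b, (q:ℝ)^(i+1) := by
    rw [prod_mul_distrib, prod_const, card_range, ← pow_mul, mul_comm (a-b) b]
  calc ∏ i ∈ range b, ((q:ℝ)^(a-b) * (q:ℝ)^(i+1) - 1)
      ≤ (q:ℝ)^(b*(a-b)) * ∏ i ∈ range b, (q:ℝ)^(i+1) := by rw [← hsplit]; exact hN
    _ ≤ (q:ℝ)^(b*(a-b)) * (2 * ∏ i ∈ range b, ((q:ℝ)^(i+1) - 1)) := by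
        apply mul_le_mul_of_nonneg_left (aux_hg hQ b) (by positivity)
    _ = 2 * (q:ℝ)^(b*(a-b)) * ∏ i ∈ range b, ((q:ℝ)^(i+1) - 1) := by ring

private lemma gbin_ge {q : ℕ} (hq : 3 ≤ q) {a b : ℕ} (hba : b ≤ a) :
    (q:ℝ)^(b*(a-b)) ≤ gbin q a (b:ℤ) := by
  have hQ : (3:ℝ) ≤ (q:ℝ) := by exact_mod_cast hq
  have hQ1 : (1:ℝ) ≤ (q:ℝ) := by linarith
  rw [gbin_eq, aux_num_eq hba]
  have hg := aux_gprod_pos hQ b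
  rw [le_div_iff₀ hg]
  have hN : ∏ i ∈ range b, ((q:ℝ)^(a-b) * ((q:ℝ)^(i+1) - 1))
      ≤ ∏ i ∈ range b, ((q:ℝ)^(a-b) * (q:ℝ)^(i+1) - 1) := by
    apply prod_le_prod
    · intro i _
      have h1 : (1:ℝ) ≤ (q:ℝ)^(a-b) := one_le_pow₀ hQ1
      have h3 : (1:ℝ) ≤ (q:ℝ)^(i+1) := one_le_pow₀ hQ1
      nlinarith
    · intro i _
      have h1 : (1:ℝ) ≤ (q:ℝ)^(a-b) := one_le_pow₀ hQ1
      have h3 : (1:ℝ) ≤ (q:ℝ)^(i+1) := one_le_pow₀ hQ1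
      nlinarith
  have hsplit : ∏ i ∈ range b, ((q:ℝ)^(a-b) * ((q:ℝ)^(i+1) - 1))
      = (q:ℝ)^(b*(a-b)) * ∏ i ∈ range b, ((q:ℝ)^(i+1) - 1) := by
    rw [prod_mul_distrib, prod_const, card_range, ← pow_mul, mul_comm (a-b) b]
  calc (q:ℝ)^(b*(a-b)) * ∏ i ∈ range b, ((q:ℝ)^(i+1) - 1)
      = ∏ i ∈ range b, ((q:ℝ)^(a-b) * ((q:ℝ)^(i+1) - 1)) := hsplit.symm
    _ ≤ _ := hN

private lemma gbin_nonneg {q : ℕ} (hq : 3 ≤ q) (a : ℕ) (b : ℕ) :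
    0 ≤ gbin q a (b:ℤ) := by
  have hQ1 : (1:ℝ) ≤ (q:ℝ) := by
    have : (3:ℝ) ≤ (q:ℝ) := by exact_mod_cast hq
    linarith
  rw [gbin_eq]
  apply div_nonneg
  · apply prod_nonneg; intro i _
    have : (1:ℝ) ≤ (q:ℝ)^(a-i) := one_le_pow₀ hQ1
    linarith
  · exact (aux_gprod_pos (by exact_mod_cast hq) b).le

private lemma theta_le {q : ℕ} (hq : 3 ≤ q) (m : ℕ) : theta q m ≤ 3/2 * (q:ℝ)^m := by
  have hQ : (3:ℝ) ≤ (q:ℝ) := by exact_mod_cast hq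
  have hQ1 : (1:ℝ) ≤ (q:ℝ)^m := one_le_pow₀ (by linarith)
  rw [theta, div_le_iff₀ (by linarith), pow_succ]
  nlinarith

private lemma theta_ge {q : ℕ} (hq : 3 ≤ q) (m : ℕ) :
    (q:ℝ)^(m+1) + (q:ℝ)^m ≤ theta q (m+1) := by
  have hQ : (3:ℝ) ≤ (q:ℝ) := by exact_mod_cast hq
  have hQ1 : (1:ℝ) ≤ (q:ℝ)^m := one_le_pow₀ (by linarith)
  rw [theta, le_div_iff₀ (by linarith),
    show (q:ℝ)^(m+1+1) = (q:ℝ)^m*(q:ℝ)*(q:ℝ) from by rw [pow_succ, pow_succ],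
    show (q:ℝ)^(m+1) = (q:ℝ)^m*(q:ℝ) from pow_succ _ _]
  nlinarith

theorem stmt_8 (q n k t : ℕ) (hn : 2*k < n + t) (hk1 : t + 1 < k) (hk2 : k < 2*t + 2)
    (hq : 3 ≤ q) :
    theta q (k+1) + ∑ j ∈ Finset.range (k-t-1),
        gbin q (k-t+1) ((j:ℤ)+1) * (q:ℝ)^((k-t-j)*(k-t-j-1)) *
          gbin q (n-k-1) ((k:ℤ)-t-j-1)
    < gbin q (n-t-2) ((k:ℤ)-t-2) *
        (1 + theta q (t+2) * (q:ℝ)^(k-t-1) * (((q:ℝ)^(n-k) - 1)/((q:ℝ)^(k-t-1) - 1))) := by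
  obtain ⟨c, hc⟩ : ∃ c, k = t+2+c := ⟨k-(t+2), by omega⟩
  obtain ⟨e, he⟩ : ∃ e, t = c+1+e := ⟨t-(c+1), by omega⟩
  obtain ⟨d, hd⟩ : ∃ d, n = t+2*c+5+d := ⟨n-(t+2*c+5), by omega⟩
  have hQ : (3:ℝ) ≤ (q:ℝ) := by exact_mod_cast hq
  have hQ1 : (1:ℝ) ≤ (q:ℝ) := by linarith
  have hQ0 : (0:ℝ) < (q:ℝ) := by linarith
  rw [show k - t - 1 = c+1 from by omega]
  rw [show n - t - 2 = 2*c+3+d from by omega]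
  rw [show n - k = c+3+d from by omega]
  rw [show (k:ℤ) - t - 2 = ((c:ℕ):ℤ) from by omega]
  rw [Finset.sum_range_succ']
  rw [show c+3+d-1 = c+2+d from by omega]
  rw [show k - t + 1 = c+3 from by omega]
  -- bound on the j = 0 term
  have hT0 : gbin q (c+3) (((0:ℕ):ℤ) + 1) * (q:ℝ)^((k-t-0)*(k-t-0-1)) *
      gbin q (c+2+d) ((k:ℤ)-(t:ℤ)-((0:ℕ):ℤ)-1)
      ≤ 3 * (q:ℝ)^((c+2)*(c+2)+(c+1)*(d+1)) := by
    rw [show ((0:ℕ):ℤ) + 1 = ((1:ℕ):ℤ) from by omega]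
    rw [show k-t-0 = c+2 from by omega]
    rw [show c+2-1 = c+1 from by omega]
    rw [show (k:ℤ)-(t:ℤ)-((0:ℕ):ℤ)-1 = ((c+1:ℕ):ℤ) from by omega]
    have h1 : gbin q (c+3) ((1:ℕ):ℤ) = theta q (c+2) := by
      rw [gbin_eq, theta]
      simp
    have h2 := theta_le hq (c+2)
    have h3 := gbin_le hq (show c+1 ≤ c+2+d by omega)
    rw [show c+2+d-(c+1) = d+1 from by omega] at h3
    calc gbin q (c+3) ((1:ℕ):ℤ) * (q:ℝ)^((c+2)*(c+1)) * gbin q (c+2+d) ((c+1:ℕ):ℤ)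
        ≤ (3/2*(q:ℝ)^(c+2)) * (q:ℝ)^((c+2)*(c+1)) * (2*(q:ℝ)^((c+1)*(d+1))) := by
          apply mul_le_mul _ h3 (gbin_nonneg hq _ _) (by positivity)
          apply mul_le_mul_of_nonneg_right _ (by positivity)
          rw [h1]; exact h2
      _ = 3 * (q:ℝ)^((c+2)*(c+2)+(c+1)*(d+1)) := by
          rw [show (c+2)*(c+2)+(c+1)*(d+1) = (c+2) + ((c+2)*(c+1) + (c+1)*(d+1)) from by ring,
              pow_add, pow_add]
          ring
  -- bound on the rest of the sum
  have hS : ∑ j ∈ Finset.range c,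
      gbin q (c+3) (((j+1:ℕ):ℤ)+1) * (q:ℝ)^((k-t-(j+1))*(k-t-(j+1)-1)) *
        gbin q (c+2+d) ((k:ℤ)-(t:ℤ)-((j+1:ℕ):ℤ)-1)
      ≤ 8/27 * (q:ℝ)^((c+2)*(c+2)+(c+1)*(d+1)) := by
    have hterm : ∀ j ∈ Finset.range c,
        gbin q (c+3) (((j+1:ℕ):ℤ)+1) * (q:ℝ)^((k-t-(j+1))*(k-t-(j+1)-1)) *
          gbin q (c+2+d) ((k:ℤ)-(t:ℤ)-((j+1:ℕ):ℤ)-1)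
        ≤ 4/27 * (q:ℝ)^((c+2)*(c+2)+(c+1)*(d+1)) * (1/2)^j := by
      intro j hj
      simp only [Finset.mem_range] at hj
      obtain ⟨u, hu⟩ : ∃ u, c = j+1+u := ⟨c-(j+1), by omega⟩
      rw [show ((j+1:ℕ):ℤ)+1 = ((j+2:ℕ):ℤ) from by omega]
      rw [show k-t-(j+1) = u+2 from by omega, show u+2-1 = u+1 from by omega]
      rw [show (k:ℤ)-(t:ℤ)-((j+1:ℕ):ℤ)-1 = ((u+1:ℕ):ℤ) from by omega]
      have hb1 := gbin_le hq (show j+2 ≤ c+3 by omega)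
      rw [show c+3-(j+2) = u+2 from by omega] at hb1
      have hb3 := gbin_le hq (show u+1 ≤ c+2+d by omega)
      rw [show c+2+d-(u+1) = j+2+d from by omega] at hb3
      have step1 : gbin q (c+3) ((j+2:ℕ):ℤ) * (q:ℝ)^((u+2)*(u+1)) * gbin q (c+2+d) ((u+1:ℕ):ℤ)
          ≤ (2*(q:ℝ)^((j+2)*(u+2))) * (q:ℝ)^((u+2)*(u+1)) * (2*(q:ℝ)^((u+1)*(j+2+d))) := by
        apply mul_le_mul _ hb3 (gbin_nonneg hq _ _) (by positivity)
        exact mul_le_mul_of_nonneg_right hb1 (by positivity)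
      have hE : (j+2)*(u+2) + ((u+2)*(u+1) + (u+1)*(j+2+d)) + (3+3*j) + (j+1)*(j+d)
          = (c+2)*(c+2)+(c+1)*(d+1) := by rw [hu]; ring
      have hexp : (j+2)*(u+2) + ((u+2)*(u+1) + (u+1)*(j+2+d)) + (3+3*j)
          ≤ (c+2)*(c+2)+(c+1)*(d+1) := Nat.le.intro hE
      have h27 : (27:ℝ) * 2^j ≤ (q:ℝ)^(3+3*j) := by
        rw [pow_add, pow_mul]
        have h1 : (27:ℝ) ≤ (q:ℝ)^3 := by
          rw [pow_succ, pow_succ, pow_one]; nlinarith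
        have h2 : (2:ℝ)^j ≤ ((q:ℝ)^3)^j := pow_le_pow_left₀ (by norm_num) (by nlinarith) j
        nlinarith [pow_nonneg (by norm_num : (0:ℝ) ≤ 2) j,
          pow_pos (by positivity : (0:ℝ) < (q:ℝ)^3) j]
      have key : ((q:ℝ)^((j+2)*(u+2)) * (q:ℝ)^((u+2)*(u+1) + (u+1)*(j+2+d))) * (27 * 2^j)
          ≤ (q:ℝ)^((c+2)*(c+2)+(c+1)*(d+1)) := by
        rw [← pow_add]
        calc (q:ℝ)^((j+2)*(u+2) + ((u+2)*(u+1)+(u+1)*(j+2+d))) * (27*2^j)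
            ≤ (q:ℝ)^((j+2)*(u+2) + ((u+2)*(u+1)+(u+1)*(j+2+d))) * (q:ℝ)^(3+3*j) :=
              mul_le_mul_of_nonneg_left h27 (by positivity)
          _ = (q:ℝ)^((j+2)*(u+2) + ((u+2)*(u+1)+(u+1)*(j+2+d)) + (3+3*j)) := by rw [← pow_add]
          _ ≤ _ := pow_le_pow_right₀ hQ1 hexp
      have h21 : (2:ℝ)^j*((1:ℝ)/2)^j = 1 := by rw [← mul_pow]; norm_num
      have hmul := mul_le_mul_of_nonneg_left key
        (show (0:ℝ) ≤ 4/27*((1:ℝ)/2)^j by positivity)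
      have heq : (4:ℝ)/27*((1:ℝ)/2)^j *
          (((q:ℝ)^((j+2)*(u+2)) * (q:ℝ)^((u+2)*(u+1) + (u+1)*(j+2+d))) * (27*2^j))
          = 4*((q:ℝ)^((j+2)*(u+2)) * (q:ℝ)^((u+2)*(u+1) + (u+1)*(j+2+d))) := by
        rw [show (4:ℝ)/27*((1:ℝ)/2)^j *
          (((q:ℝ)^((j+2)*(u+2)) * (q:ℝ)^((u+2)*(u+1) + (u+1)*(j+2+d))) * (27*2^j))
          = 4*((q:ℝ)^((j+2)*(u+2)) * (q:ℝ)^((u+2)*(u+1) + (u+1)*(j+2+d)))*((2:ℝ)^j*((1:ℝ)/2)^j)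
          from by ring, h21, mul_one]
      calc gbin q (c+3) ((j+2:ℕ):ℤ) * (q:ℝ)^((u+2)*(u+1)) * gbin q (c+2+d) ((u+1:ℕ):ℤ)
          ≤ (2*(q:ℝ)^((j+2)*(u+2))) * (q:ℝ)^((u+2)*(u+1)) * (2*(q:ℝ)^((u+1)*(j+2+d))) := step1
        _ = 4*((q:ℝ)^((j+2)*(u+2)) * (q:ℝ)^((u+2)*(u+1) + (u+1)*(j+2+d))) := by
            rw [pow_add]; ring
        _ ≤ 4/27 * ((1:ℝ)/2)^j * (q:ℝ)^((c+2)*(c+2)+(c+1)*(d+1)) := by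
            rw [← heq]; exact hmul
        _ = 4/27 * (q:ℝ)^((c+2)*(c+2)+(c+1)*(d+1)) * (1/2)^j := by ring
    calc ∑ j ∈ Finset.range c,
        gbin q (c+3) (((j+1:ℕ):ℤ)+1) * (q:ℝ)^((k-t-(j+1))*(k-t-(j+1)-1)) *
          gbin q (c+2+d) ((k:ℤ)-(t:ℤ)-((j+1:ℕ):ℤ)-1)
        ≤ ∑ j ∈ Finset.range c, 4/27 * (q:ℝ)^((c+2)*(c+2)+(c+1)*(d+1)) * (1/2)^j :=
          Finset.sum_le_sum hterm
      _ = 4/27 * (q:ℝ)^((c+2)*(c+2)+(c+1)*(d+1)) * ∑ j ∈ Finset.range c, ((1:ℝ)/2)^j := by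
          rw [Finset.mul_sum]
      _ ≤ 4/27 * (q:ℝ)^((c+2)*(c+2)+(c+1)*(d+1)) * 2 := by
          exact mul_le_mul_of_nonneg_left (sum_geometric_two_le c) (by positivity)
      _ = 8/27 * (q:ℝ)^((c+2)*(c+2)+(c+1)*(d+1)) := by ring
  -- lower bound on the right-hand side
  have hprod1 : (q:ℝ)^(c*(c+3+d)) * ((q:ℝ)^(t+2) * (q:ℝ)^(c+1) * (q:ℝ)^(d+2))
      = (q:ℝ)^((c+2)*(c+2)+(c+1)*(d+1)+e+1) := by
    rw [← pow_add, ← pow_add, ← pow_add]; congr 1; rw [he]; ring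
  have hprod2 : (q:ℝ)^(c*(c+3+d)) * ((q:ℝ)^(t+1) * (q:ℝ)^(c+1) * (q:ℝ)^(d+2))
      = (q:ℝ)^((c+2)*(c+2)+(c+1)*(d+1)+e) := by
    rw [← pow_add, ← pow_add, ← pow_add]; congr 1; rw [he]; ring
  have hRHS : (q:ℝ)^((c+2)*(c+2)+(c+1)*(d+1)+e+1) + (q:ℝ)^((c+2)*(c+2)+(c+1)*(d+1)+e)
      ≤ gbin q (2*c+3+d) ((c:ℕ):ℤ) *
        (1 + theta q (t+2) * (q:ℝ)^(c+1) * (((q:ℝ)^(c+3+d) - 1)/((q:ℝ)^(c+1) - 1))) := by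
    have h1 := gbin_ge hq (show c ≤ 2*c+3+d by omega)
    rw [show 2*c+3+d-c = c+3+d from by omega] at h1
    have hθ : (q:ℝ)^(t+2) + (q:ℝ)^(t+1) ≤ theta q (t+2) := by
      simpa using theta_ge hq (t+1)
    have hden : (0:ℝ) < (q:ℝ)^(c+1) - 1 := by
      have h := pow_le_pow_right₀ hQ1 (show 1 ≤ c+1 by omega)
      rw [pow_one] at h
      linarith
    have h3 : (q:ℝ)^(d+2) ≤ ((q:ℝ)^(c+3+d) - 1)/((q:ℝ)^(c+1) - 1) := by
      rw [le_div_iff₀ hden]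
      have hpp : (q:ℝ)^(d+2)*(q:ℝ)^(c+1) = (q:ℝ)^(c+3+d) := by
        rw [← pow_add]; congr 1; omega
      have h1d : (1:ℝ) ≤ (q:ℝ)^(d+2) := one_le_pow₀ hQ1
      nlinarith
    have hθpos : (0:ℝ) < theta q (t+2) := lt_of_lt_of_le (by positivity) hθ
    have step1 : ((q:ℝ)^(t+2)+(q:ℝ)^(t+1)) * (q:ℝ)^(c+1) * (q:ℝ)^(d+2)
        ≤ theta q (t+2) * (q:ℝ)^(c+1) * (((q:ℝ)^(c+3+d) - 1)/((q:ℝ)^(c+1) - 1)) := by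
      apply mul_le_mul _ h3 (by positivity) (mul_nonneg hθpos.le (by positivity))
      exact mul_le_mul_of_nonneg_right hθ (by positivity)
    have hgpos : (0:ℝ) < (q:ℝ)^(c*(c+3+d)) := by positivity
    calc (q:ℝ)^((c+2)*(c+2)+(c+1)*(d+1)+e+1) + (q:ℝ)^((c+2)*(c+2)+(c+1)*(d+1)+e)
        = (q:ℝ)^(c*(c+3+d)) * (((q:ℝ)^(t+2)+(q:ℝ)^(t+1)) * (q:ℝ)^(c+1) * (q:ℝ)^(d+2)) := by
          rw [← hprod1, ← hprod2]; ring
      _ ≤ gbin q (2*c+3+d) ((c:ℕ):ℤ) *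
          (1 + theta q (t+2) * (q:ℝ)^(c+1) * (((q:ℝ)^(c+3+d) - 1)/((q:ℝ)^(c+1) - 1))) := by
          apply mul_le_mul h1 _ (by positivity) (le_trans hgpos.le h1)
          linarith [step1]
  have hθk : theta q (k+1) ≤ 3/2 * (q:ℝ)^(2*c+4+e) := by
    rw [show 2*c+4+e = k+1 from by omega]
    exact theta_le hq (k+1)
  have hp1 : 3*(q:ℝ)^(2*c+4+e) ≤ (q:ℝ)^((c+2)*(c+2)+(c+1)*(d+1)+e) := by
    calc 3*(q:ℝ)^(2*c+4+e) ≤ (q:ℝ)*(q:ℝ)^(2*c+4+e) :=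
          mul_le_mul_of_nonneg_right hQ (by positivity)
      _ = (q:ℝ)^(2*c+5+e) := by
          rw [show 2*c+5+e = 2*c+4+e+1 from by omega, pow_succ]; ring
      _ ≤ (q:ℝ)^((c+2)*(c+2)+(c+1)*(d+1)+e) := pow_le_pow_right₀ hQ1
          (Nat.le.intro (show 2*c+5+e + (c*c+3*c+c*d+d) = (c+2)*(c+2)+(c+1)*(d+1)+e from by ring))
  have hp2 : (q:ℝ)^((c+2)*(c+2)+(c+1)*(d+1)) ≤ (q:ℝ)^((c+2)*(c+2)+(c+1)*(d+1)+e) :=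
    pow_le_pow_right₀ hQ1 (Nat.le_add_right _ _)
  have hp3 : 3*(q:ℝ)^((c+2)*(c+2)+(c+1)*(d+1)+e) ≤ (q:ℝ)^((c+2)*(c+2)+(c+1)*(d+1)+e+1) := by
    rw [pow_succ]
    nlinarith [pow_pos hQ0 ((c+2)*(c+2)+(c+1)*(d+1)+e)]
  have hg0pos : (0:ℝ) < (q:ℝ)^((c+2)*(c+2)+(c+1)*(d+1)+e) := by positivity
  apply lt_of_lt_of_le _ hRHS
  linarith [hθk, hS, hT0, hp1, hp2, hp3, hg0pos]
end

section
/- For integers n > 2k + t + 2, q ≥ 3, k > t + 1, t > 0 and all integers x > 2: (θ_{k-t})^x · [n-t-x choose k-t-x]_q · q^x · [t+x choose x]_q < (θ_{k-t})^2 · [n-t-2 choose k-t-2]_q · q^2 · [t+2 choose 2]_q. -/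
/-!
Write `N = n - t`, `s = k - t` and `F x = θ_s^x [N-x choose s-x]_q q^x [t+x choose x]_q`.
By `[N choose m+1]_q = (q^N - 1)/(q^{m+1} - 1) [N-1 choose m]_q`, for `y < s` the ratio
`F (y+1) / F y` equals `q θ_s (q^{t+y+1} - 1)(q^{s-y} - 1) / ((q^{y+1} - 1)(q^{N-y} - 1))`.
Bounding `q^j - 1` above by `q^j` and below by `(q - 1) q^{j-1}`, it is less than
`q^{2s+t+4-N} / (q - 1)^3 ≤ q / (q - 1)^3 < 1` when `N > 2s + t + 2` and `q ≥ 3`.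
So `F` decreases strictly on `[0, s]` and vanishes beyond `s`.
-/

lemma gbin_natCast (q N K : ℕ) :
    gbin q N K = ∏ i ∈ Finset.range K, ((q:ℝ)^(N-i) - 1)/((q:ℝ)^(i+1) - 1) := by
  rw [gbin, if_pos (Int.natCast_nonneg K), Int.toNat_natCast]

lemma gbin_of_neg (q N : ℕ) {K : ℤ} (hK : K < 0) : gbin q N K = 0 :=
  if_neg (not_le.2 hK)

lemma gbin_succ (q N m : ℕ) :
    gbin q N (m + 1 : ℕ) = ((q:ℝ)^N - 1)/((q:ℝ)^(m+1) - 1) * gbin q (N-1) m := by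
  simp only [gbin_natCast, Finset.prod_div_distrib]
  rw [Finset.prod_range_succ' (fun i => (q:ℝ)^(N-i) - 1), Finset.prod_range_succ]
  simp only [Nat.sub_sub, Nat.add_comm 1, Nat.sub_zero]
  rw [mul_div_mul_comm, mul_comm]

lemma gbin_pos {q : ℕ} (hq : 2 ≤ q) {N K : ℕ} (hK : K ≤ N) : 0 < gbin q N K := by
  have hq1 : (1:ℝ) < q := by exact_mod_cast hq
  rw [gbin_natCast]
  refine Finset.prod_pos fun i hi => div_pos ?_ ?_
  · have : i < N := (Finset.mem_range.1 hi).trans_le hK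
    exact sub_pos.2 (one_lt_pow₀ hq1 (by omega))
  · exact sub_pos.2 (one_lt_pow₀ hq1 (by omega))

lemma theta_pos {q : ℕ} (hq : 2 ≤ q) (m : ℕ) : 0 < theta q m := by
  have hq1 : (1:ℝ) < q := by exact_mod_cast hq
  exact div_pos (sub_pos.2 (one_lt_pow₀ hq1 (by omega))) (sub_pos.2 hq1)

lemma sub_one_mul_pow_le_pow_succ_sub_one {Q : ℝ} (hQ : 1 ≤ Q) (d : ℕ) :
    (Q - 1) * Q ^ d ≤ Q ^ (d + 1) - 1 := by
  have := one_le_pow₀ (n := d) hQ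
  rw [pow_succ]
  nlinarith

lemma mul_pow_sub_one_lt {Q : ℝ} (hQ : 3 ≤ Q) {a b c d e : ℕ} (h : a + b + c ≤ d + e) :
    Q * (Q^a - 1) * (Q^b - 1) * (Q^c - 1) < (Q - 1) * (Q^(d+1) - 1) * (Q^(e+1) - 1) := by
  have hQ1 : 1 ≤ Q := by linarith
  have hsub : ∀ m : ℕ, 0 ≤ Q ^ m - 1 := fun m => sub_nonneg.2 (one_le_pow₀ hQ1)
  calc Q * (Q^a - 1) * (Q^b - 1) * (Q^c - 1)
      ≤ Q * Q^a * Q^b * Q^c := by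
        gcongr <;> first | exact hsub _ | exact sub_le_self _ zero_le_one
    _ = Q ^ (a + b + c) * Q := by ring
    _ ≤ Q ^ (d + e) * Q := by gcongr
    _ < Q ^ (d + e) * (Q - 1) ^ 3 := by
        have : 4 ≤ (Q - 1) ^ 2 := by nlinarith
        gcongr
        nlinarith
    _ = (Q - 1) * ((Q - 1) * Q ^ d) * ((Q - 1) * Q ^ e) := by ring
    _ ≤ (Q - 1) * (Q^(d+1) - 1) * (Q^(e+1) - 1) := by
        gcongr
        · exact mul_nonneg (by linarith) (hsub _)
        · exact sub_one_mul_pow_le_pow_succ_sub_one hQ1 d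
        · exact sub_one_mul_pow_le_pow_succ_sub_one hQ1 e

noncomputable def countingBound (q N s t x : ℕ) : ℝ :=
  theta q s ^ x * gbin q (N - x) ((s:ℤ) - x) * (q:ℝ) ^ x * gbin q (t + x) x

section countingBound

variable {q : ℕ} (N s t : ℕ)

lemma countingBound_eq_zero {x : ℕ} (hx : s < x) : countingBound q N s t x = 0 := by
  rw [countingBound, gbin_of_neg q _ (by omega)]
  ring

lemma countingBound_pos (hq : 2 ≤ q) (hsN : s ≤ N) {x : ℕ} (hx : x ≤ s) :
    0 < countingBound q N s t x := by
  have hcast : (s:ℤ) - x = (s - x : ℕ) := by omega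
  rw [countingBound, hcast]
  have := theta_pos hq s
  have := gbin_pos hq (show s - x ≤ N - x by omega)
  have := gbin_pos hq (show x ≤ t + x by omega)
  positivity

lemma countingBound_succ_lt_of_lt (hq : 3 ≤ q) (hN : 2 * s + t + 2 < N) {y : ℕ} (hy : y < s) :
    countingBound q N s t (y + 1) < countingBound q N s t y := by
  obtain ⟨m, rfl⟩ : ∃ m, s = y + (m + 1) := ⟨s - y - 1, by omega⟩
  have hQ : (3:ℝ) ≤ q := by exact_mod_cast hq
  have hden : ∀ j : ℕ, (0:ℝ) < (q:ℝ) ^ (j + 1) - 1 :=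
    fun j => sub_pos.2 (one_lt_pow₀ (by linarith) (by omega))
  have hG : gbin q (N - y) ((y + (m + 1) : ℕ) - y : ℤ)
      = ((q:ℝ) ^ (N - y) - 1) / ((q:ℝ) ^ (m + 1) - 1) * gbin q (N - (y + 1)) m := by
    rw [show ((y + (m + 1) : ℕ) - y : ℤ) = (m + 1 : ℕ) by push_cast; ring, gbin_succ,
      Nat.sub_sub]
  have hG' : ((y + (m + 1) : ℕ) - (y + 1 : ℕ) : ℤ) = m := by push_cast; ring
  have hH : gbin q (t + (y + 1)) (y + 1 : ℕ)
      = ((q:ℝ) ^ (t + y + 1) - 1) / ((q:ℝ) ^ (y + 1) - 1) * gbin q (t + y) y := by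
    rw [gbin_succ, ← add_assoc, Nat.add_sub_cancel]
  have hratio : theta q (y + (m + 1)) * q * (((q:ℝ) ^ (t + y + 1) - 1) / ((q:ℝ) ^ (y + 1) - 1))
      < ((q:ℝ) ^ (N - y) - 1) / ((q:ℝ) ^ (m + 1) - 1) := by
    rw [theta, div_mul_eq_mul_div, div_mul_div_comm, div_lt_div_iff₀
      (mul_pos (by linarith) (hden y)) (hden m)]
    have key := mul_pow_sub_one_lt hQ (a := y + (m + 1) + 1) (b := m + 1) (c := t + y + 1)
      (d := N - y - 1) (e := y) (by omega)
    rw [Nat.sub_add_cancel (by omega)] at key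
    linarith
  have hC : 0 < theta q (y + (m + 1)) ^ y * (q:ℝ) ^ y * gbin q (N - (y + 1)) m
      * gbin q (t + y) y := by
    have := theta_pos (by omega : 2 ≤ q) (y + (m + 1))
    have := gbin_pos (by omega : 2 ≤ q) (show m ≤ N - (y + 1) by omega)
    have := gbin_pos (by omega : 2 ≤ q) (show y ≤ t + y by omega)
    positivity
  calc countingBound q N (y + (m + 1)) t (y + 1)
      = theta q (y + (m + 1)) ^ y * (q:ℝ) ^ y * gbin q (N - (y + 1)) m * gbin q (t + y) y
        * (theta q (y + (m + 1)) * q * (((q:ℝ) ^ (t + y + 1) - 1) / ((q:ℝ) ^ (y + 1) - 1))) := by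
        rw [countingBound, hG', hH]
        ring
    _ < theta q (y + (m + 1)) ^ y * (q:ℝ) ^ y * gbin q (N - (y + 1)) m * gbin q (t + y) y
        * (((q:ℝ) ^ (N - y) - 1) / ((q:ℝ) ^ (m + 1) - 1)) := by gcongr
    _ = countingBound q N (y + (m + 1)) t y := by
        rw [countingBound, hG]
        ring

lemma countingBound_strictAntiOn (hq : 3 ≤ q) (hN : 2 * s + t + 2 < N) :
    StrictAntiOn (countingBound q N s t) (Set.Iic (s + 1)) := by
  refine strictAntiOn_Iic_of_succ_lt fun y hy => ?_
  rw [Order.succ_eq_add_one]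
  rcases (Nat.lt_succ_iff.1 hy).lt_or_eq with hy | rfl
  · exact countingBound_succ_lt_of_lt N s t hq hN hy
  · rw [countingBound_eq_zero N y t (lt_add_one y)]
    exact countingBound_pos N y t (by omega) (by omega) le_rfl

lemma countingBound_lt (hq : 3 ≤ q) (hN : 2 * s + t + 2 < N) {x₀ x : ℕ} (hx₀ : x₀ ≤ s)
    (hx : x₀ < x) : countingBound q N s t x < countingBound q N s t x₀ := by
  by_cases hxs : x ≤ s + 1
  · exact countingBound_strictAntiOn N s t hq hN (Set.mem_Iic.2 (by omega)) hxs hx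
  · rw [countingBound_eq_zero N s t (by omega)]
    exact countingBound_pos N s t (by omega) (by omega) hx₀

end countingBound

theorem stmt_12_general (q n k t x : ℕ) (hn : 2*k + t + 2 < n) (hq : 3 ≤ q) (hk : t + 1 < k)
    (hx : 2 < x) :
    (theta q (k-t))^x * gbin q (n-t-x) ((k:ℤ)-t-x) * (q:ℝ)^x * gbin q (t+x) (x:ℤ)
    < (theta q (k-t))^2 * gbin q (n-t-2) ((k:ℤ)-t-2) * (q:ℝ)^2 * gbin q (t+2) (2:ℤ) := by
  have key := countingBound_lt (n - t) (k - t) t hq (by omega) (x₀ := 2) (by omega) hx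
  have hcast : ∀ y : ℕ, ((k - t : ℕ) : ℤ) - y = (k:ℤ) - t - y := fun y => by omega
  simp only [countingBound, hcast] at key
  exact_mod_cast key

theorem stmt_12 (q n k t x : ℕ) (hn : 2*k + t + 2 < n) (hq : 3 ≤ q) (hk : t + 1 < k)
    (ht : 0 < t) (hx : 2 < x) :
    (theta q (k-t))^x * gbin q (n-t-x) ((k:ℤ)-t-x) * (q:ℝ)^x * gbin q (t+x) (x:ℤ)
    < (theta q (k-t))^2 * gbin q (n-t-2) ((k:ℤ)-t-2) * (q:ℝ)^2 * gbin q (t+2) (2:ℤ) :=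
  stmt_12_general q n k t x hn hq hk hx
end

section
/- For integers n > 2k + t + 2, q ≥ 3, k > t + 1, t > 0: 2·[n-t-1 choose k-t-1]_q + (θ_{t+1}·θ_{k-t} − θ_{t+1} − 1)·θ_{k-t}·[n-t-2 choose k-t-2]_q is strictly less than both θ_{k+1} + θ_{k-t}·q^{(k-t)(k-t-1)}·[n-k-1 choose k-t-1]_q (relevant when k > 2t+2) and [n-t-2 choose k-t-2]_q·(1 + θ_{t+2}·q^{k-t-1}·(q^{n-k}−1)/(q^{k-t-1}−1)) (relevant when k ≤ 2t+2). -/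
set_option maxHeartbeats 1000000
open Finset


lemma w_aux (x : ℝ) (h0 : 0 ≤ x) (h3 : 3*x ≤ 1) (m : ℕ) :
    (1 - 2*x + x^(m+1))/(1-x) ≤ ∏ i ∈ Finset.range m, (1 - x^(i+1)) := by
  have hx1 : x ≤ 1 := by linarith
  have hx1' : (0:ℝ) < 1 - x := by linarith
  induction m with
  | zero => simp; rw [div_le_one hx1']; linarith
  | succ m ih =>
    rw [Finset.prod_range_succ]
    have hy0 : 0 ≤ x^(m+1) := by positivity
    have hy1 : x^(m+1) ≤ x := by
      calc x^(m+1) ≤ x^1 := pow_le_pow_of_le_one h0 hx1 (by omega)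
      _ = x := pow_one x
    have h2 : (1 - 2*x + x^(m+2))/(1-x) ≤ ((1 - 2*x + x^(m+1))/(1-x)) * (1 - x^(m+1)) := by
      rw [div_mul_eq_mul_div, div_le_div_iff₀ hx1' hx1']
      have : x^(m+2) = x^(m+1) * x := by ring
      nlinarith [sq_nonneg (x^(m+1)), mul_le_mul_of_nonneg_left hy1 hy0]
    calc (1 - 2*x + x^(m+2))/(1-x) ≤ ((1 - 2*x + x^(m+1))/(1-x)) * (1 - x^(m+1)) := h2
    _ ≤ (∏ i ∈ Finset.range m, (1 - x^(i+1))) * (1 - x^(m+1)) := by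
        apply mul_le_mul_of_nonneg_right ih (by nlinarith)

lemma w1 (x : ℝ) (h0 : 0 ≤ x) (h3 : 3*x ≤ 1) (m : ℕ) :
    (1:ℝ)/2 ≤ ∏ i ∈ Finset.range m, (1 - x^(i+1)) := by
  refine le_trans ?_ (w_aux x h0 h3 m)
  have hx1' : (0:ℝ) < 1 - x := by linarith
  rw [le_div_iff₀ hx1']
  have : 0 ≤ x^(m+1) := by positivity
  nlinarith

lemma prod_le_one_aux (x : ℝ) (h0 : 0 ≤ x) (hx1 : x ≤ 1) (m : ℕ) (f : ℕ → ℕ) :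
    ∏ i ∈ Finset.range m, (1 - x^(f i)) ≤ 1 := by
  apply Finset.prod_le_one
  · intro i _
    have : x^(f i) ≤ 1 := pow_le_one₀ h0 hx1
    linarith
  · intro i _
    have : 0 ≤ x^(f i) := by positivity
    linarith

lemma w2 (x : ℝ) (h0 : 0 ≤ x) (h3 : 3*x ≤ 1) (m N : ℕ) (hmN : m ≤ N) :
    (1:ℝ)/2 ≤ ∏ i ∈ Finset.range m, (1 - x^(N-i)) := by
  have hx1 : x ≤ 1 := by linarith
  have h1 : ∏ i ∈ Finset.range m, (1 - x^(m-i)) ≤ ∏ i ∈ Finset.range m, (1 - x^(N-i)) := by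
    apply Finset.prod_le_prod
    · intro i _
      have : x^(m-i) ≤ 1 := pow_le_one₀ h0 hx1
      linarith
    · intro i hi
      have : x^(N-i) ≤ x^(m-i) := pow_le_pow_of_le_one h0 hx1 (by omega)
      linarith
  refine le_trans ?_ h1
  have h2 : ∏ i ∈ Finset.range m, (1 - x^(m-i)) = ∏ i ∈ Finset.range m, (1 - x^(i+1)) := by
    rw [← Finset.prod_range_reflect (fun j => 1 - x^(j+1)) m]
    apply Finset.prod_congr rfl
    intro i hi
    simp only [Finset.mem_range] at hi
    congr 2
    omega
  rw [h2]
  exact w1 x h0 h3 m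

lemma prod_pow_ratio (r : ℝ) (hr : 0 < r) (N m : ℕ) (h : m ≤ N) :
    ∏ i ∈ Finset.range m, (r^(N-i) / r^(i+1)) = r^(m*(N-m)) := by
  induction m with
  | zero => simp
  | succ m ih =>
    have hm : m ≤ N := by omega
    rw [Finset.prod_range_succ, ih hm]
    rw [mul_div_assoc', div_eq_iff (by positivity), ← pow_add, ← pow_add]
    congr 1
    have e1 : N - (m+1) + 1 = N - m := by omega
    calc m*(N-m) + (N-m) = (m+1)*(N-m) := by ring
    _ = (m+1)*((N-(m+1))+1) := by rw [e1]
    _ = (m+1)*(N-(m+1)) + (m+1) := by ring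



lemma gb_split (r : ℝ) (hr : 3 ≤ r) (N m : ℕ) (h : m ≤ N) :
    ∏ i ∈ Finset.range m, ((r^(N-i) - 1)/(r^(i+1) - 1))
      = r^(m*(N-m)) * ((∏ i ∈ Finset.range m, (1 - r⁻¹^(N-i))) /
          (∏ i ∈ Finset.range m, (1 - r⁻¹^(i+1)))) := by
  have hr0 : (0:ℝ) < r := by linarith
  have hrx : r * r⁻¹ = 1 := mul_inv_cancel₀ (ne_of_gt hr0)
  have key : ∀ j : ℕ, r^j - 1 = r^j * (1 - r⁻¹^j) := by
    intro j
    have : r^j * r⁻¹^j = 1 := by rw [← mul_pow, hrx, one_pow]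
    rw [mul_sub, this, mul_one]
  have step : ∀ i ∈ Finset.range m,
      (r^(N-i) - 1)/(r^(i+1) - 1)
        = (r^(N-i)/r^(i+1)) * ((1 - r⁻¹^(N-i)) / (1 - r⁻¹^(i+1))) := by
    intro i _
    rw [key (N-i), key (i+1), mul_div_mul_comm]
  rw [Finset.prod_congr rfl step, Finset.prod_mul_distrib,
    prod_pow_ratio r hr0 N m h, Finset.prod_div_distrib]

lemma gb_ub (r : ℝ) (hr : 3 ≤ r) (N m : ℕ) (h : m ≤ N) :
    ∏ i ∈ Finset.range m, ((r^(N-i) - 1)/(r^(i+1) - 1)) ≤ 2 * r^(m*(N-m)) := by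
  have hr0 : (0:ℝ) < r := by linarith
  have hx0 : (0:ℝ) ≤ r⁻¹ := by positivity
  have hx3 : 3 * r⁻¹ ≤ 1 := by
    rw [← div_eq_mul_inv, div_le_one hr0]; linarith
  have hx1 : r⁻¹ ≤ 1 := by linarith
  rw [gb_split r hr N m h]
  have hP1 : (∏ i ∈ Finset.range m, (1 - r⁻¹^(N-i))) ≤ 1 :=
    prod_le_one_aux r⁻¹ hx0 hx1 m (fun i => N - i)
  have hP2 : (1:ℝ)/2 ≤ ∏ i ∈ Finset.range m, (1 - r⁻¹^(i+1)) := w1 r⁻¹ hx0 hx3 m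
  have hP1n : 0 ≤ ∏ i ∈ Finset.range m, (1 - r⁻¹^(N-i)) := by
    apply Finset.prod_nonneg; intro i _
    have : r⁻¹^(N-i) ≤ 1 := pow_le_one₀ hx0 hx1
    linarith
  have hdiv : (∏ i ∈ Finset.range m, (1 - r⁻¹^(N-i))) /
      (∏ i ∈ Finset.range m, (1 - r⁻¹^(i+1))) ≤ 2 := by
    rw [div_le_iff₀ (by linarith)]
    nlinarith
  have hp : (0:ℝ) < r^(m*(N-m)) := by positivity
  calc r^(m*(N-m)) * ((∏ i ∈ Finset.range m, (1 - r⁻¹^(N-i))) /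
          (∏ i ∈ Finset.range m, (1 - r⁻¹^(i+1)))) ≤ r^(m*(N-m)) * 2 :=
        mul_le_mul_of_nonneg_left hdiv (le_of_lt hp)
  _ = 2 * r^(m*(N-m)) := by ring

lemma gb_lb (r : ℝ) (hr : 3 ≤ r) (N m : ℕ) (h : m ≤ N) :
    (1/2) * r^(m*(N-m)) ≤ ∏ i ∈ Finset.range m, ((r^(N-i) - 1)/(r^(i+1) - 1)) := by
  have hr0 : (0:ℝ) < r := by linarith
  have hx0 : (0:ℝ) ≤ r⁻¹ := by positivity
  have hx3 : 3 * r⁻¹ ≤ 1 := by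
    rw [← div_eq_mul_inv, div_le_one hr0]; linarith
  have hx1 : r⁻¹ ≤ 1 := by linarith
  rw [gb_split r hr N m h]
  have hP1 : (1:ℝ)/2 ≤ ∏ i ∈ Finset.range m, (1 - r⁻¹^(N-i)) := w2 r⁻¹ hx0 hx3 m N h
  have hP2 : (∏ i ∈ Finset.range m, (1 - r⁻¹^(i+1))) ≤ 1 :=
    prod_le_one_aux r⁻¹ hx0 hx1 m (fun i => i + 1)
  have hP2p : (0:ℝ) < ∏ i ∈ Finset.range m, (1 - r⁻¹^(i+1)) := by
    have := w1 r⁻¹ hx0 hx3 m; linarith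
  have hdiv : (1:ℝ)/2 ≤ (∏ i ∈ Finset.range m, (1 - r⁻¹^(N-i))) /
      (∏ i ∈ Finset.range m, (1 - r⁻¹^(i+1))) := by
    rw [le_div_iff₀ hP2p]
    nlinarith
  have hp : (0:ℝ) < r^(m*(N-m)) := by positivity
  calc (1/2) * r^(m*(N-m)) = r^(m*(N-m)) * (1/2) := by ring
  _ ≤ r^(m*(N-m)) * ((∏ i ∈ Finset.range m, (1 - r⁻¹^(N-i))) /
          (∏ i ∈ Finset.range m, (1 - r⁻¹^(i+1)))) :=
        mul_le_mul_of_nonneg_left hdiv (le_of_lt hp)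

theorem stmt_17 (q n k t : ℕ) (hn : 2*k + t + 2 < n) (hq : 3 ≤ q) (hk : t + 1 < k)
    (ht : 0 < t) :
    (2*t + 2 < k →
      2 * gbin q (n-t-1) ((k:ℤ)-t-1) +
        (theta q (t+1) * theta q (k-t) - theta q (t+1) - 1) * theta q (k-t) *
          gbin q (n-t-2) ((k:ℤ)-t-2)
      < theta q (k+1) + theta q (k-t) * (q:ℝ)^((k-t)*(k-t-1)) *
          gbin q (n-k-1) ((k:ℤ)-t-1)) ∧
    (k ≤ 2*t + 2 →
      2 * gbin q (n-t-1) ((k:ℤ)-t-1) +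
        (theta q (t+1) * theta q (k-t) - theta q (t+1) - 1) * theta q (k-t) *
          gbin q (n-t-2) ((k:ℤ)-t-2)
      < gbin q (n-t-2) ((k:ℤ)-t-2) *
          (1 + theta q (t+2) * (q:ℝ)^(k-t-1) * (((q:ℝ)^(n-k) - 1)/((q:ℝ)^(k-t-1) - 1)))) := by
  have hr : (3:ℝ) ≤ (q:ℝ) := by exact_mod_cast hq
  have hr0 : (0:ℝ) < (q:ℝ) := by linarith
  have hr1 : (1:ℝ) ≤ (q:ℝ) := by linarith
  have hrm : (2:ℝ) ≤ (q:ℝ) - 1 := by linarith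
  have hrm0 : (0:ℝ) < (q:ℝ) - 1 := by linarith
  set m := k - t - 1 with hmdef
  set a := n - k with hadef
  clear_value m a
  have hm1 : 1 ≤ m := by omega
  have ha : k + t + 3 ≤ a := by omega
  -- rewrite the three gbin's as products
  have hG1 : gbin q (n-t-1) ((k:ℤ)-t-1)
      = ∏ i ∈ Finset.range m, (((q:ℝ)^((n-t-1)-i) - 1)/((q:ℝ)^(i+1) - 1)) := by
    rw [gbin, if_pos (by omega : (0:ℤ) ≤ (k:ℤ)-t-1)]
    have : ((k:ℤ)-t-1).toNat = m := by omega
    rw [this]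
  have hG2 : gbin q (n-t-2) ((k:ℤ)-t-2)
      = ∏ i ∈ Finset.range (m-1), (((q:ℝ)^((n-t-2)-i) - 1)/((q:ℝ)^(i+1) - 1)) := by
    rw [gbin, if_pos (by omega : (0:ℤ) ≤ (k:ℤ)-t-2)]
    have : ((k:ℤ)-t-2).toNat = m-1 := by omega
    rw [this]
  have hG3 : gbin q (a-1) ((k:ℤ)-t-1)
      = ∏ i ∈ Finset.range m, (((q:ℝ)^((a-1)-i) - 1)/((q:ℝ)^(i+1) - 1)) := by
    rw [gbin, if_pos (by omega : (0:ℤ) ≤ (k:ℤ)-t-1)]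
    have : ((k:ℤ)-t-1).toNat = m := by omega
    rw [this]
  -- bounds for the gbin's
  have hG1ub : gbin q (n-t-1) ((k:ℤ)-t-1) ≤ 2*(q:ℝ)^(m*a) := by
    rw [hG1]
    have h := gb_ub (q:ℝ) hr (n-t-1) m (by omega)
    have e : (n-t-1) - m = a := by omega
    rwa [e] at h
  have hG2ub : gbin q (n-t-2) ((k:ℤ)-t-2) ≤ 2*(q:ℝ)^((m-1)*a) := by
    rw [hG2]
    have h := gb_ub (q:ℝ) hr (n-t-2) (m-1) (by omega)
    have e : (n-t-2) - (m-1) = a := by omega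
    rwa [e] at h
  have hG2lb : (1/2)*(q:ℝ)^((m-1)*a) ≤ gbin q (n-t-2) ((k:ℤ)-t-2) := by
    rw [hG2]
    have h := gb_lb (q:ℝ) hr (n-t-2) (m-1) (by omega)
    have e : (n-t-2) - (m-1) = a := by omega
    rwa [e] at h
  have hG2nn : (0:ℝ) ≤ gbin q (n-t-2) ((k:ℤ)-t-2) := by
    refine le_trans ?_ hG2lb; positivity
  have hG3lb : (1/2)*(q:ℝ)^(m*((a-1)-m)) ≤ gbin q (a-1) ((k:ℤ)-t-1) := by
    rw [hG3]
    exact gb_lb (q:ℝ) hr (a-1) m (by omega)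
  -- theta facts
  have th_nn : ∀ s : ℕ, (0:ℝ) ≤ theta q s := by
    intro s
    have h1 : (1:ℝ) ≤ (q:ℝ)^(s+1) := one_le_pow₀ hr1
    unfold theta
    apply div_nonneg <;> linarith
  have th_lb : ∀ s : ℕ, (q:ℝ)^s ≤ theta q s := by
    intro s
    unfold theta
    rw [le_div_iff₀ hrm0]
    have h1 : (1:ℝ) ≤ (q:ℝ)^s := one_le_pow₀ hr1
    have h2 : (q:ℝ)^(s+1) = (q:ℝ)^s * (q:ℝ) := pow_succ _ _
    nlinarith
  have th_ub : ∀ s : ℕ, theta q s ≤ (q:ℝ)^(s+1)/((q:ℝ)-1) := by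
    intro s
    unfold theta
    rw [div_le_div_iff₀ hrm0 hrm0]
    nlinarith [one_le_pow₀ hr1 (n := s+1)]
  -- bound on the coefficient C'
  set C : ℝ := (theta q (t+1) * theta q (k-t) - theta q (t+1) - 1) * theta q (k-t) with hCdef
  clear_value C
  have hC : C ≤ (q:ℝ)^(2*k+4-t) / ((q:ℝ)-1)^3 := by
    have hA := th_ub (t+1)
    have hB := th_ub (k-t)
    have hAnn := th_nn (t+1)
    have hBnn := th_nn (k-t)
    have hABub : theta q (t+1) * theta q (k-t)
        ≤ ((q:ℝ)^(t+1+1)/((q:ℝ)-1)) * ((q:ℝ)^(k-t+1)/((q:ℝ)-1)) :=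
      mul_le_mul hA hB hBnn (by positivity)
    have h1 : C ≤ (theta q (t+1) * theta q (k-t)) * theta q (k-t) := by
      rw [hCdef]
      apply mul_le_mul_of_nonneg_right _ hBnn
      nlinarith
    have h2 : (theta q (t+1) * theta q (k-t)) * theta q (k-t)
        ≤ (((q:ℝ)^(t+1+1)/((q:ℝ)-1)) * ((q:ℝ)^(k-t+1)/((q:ℝ)-1))) * ((q:ℝ)^(k-t+1)/((q:ℝ)-1)) := by
      apply mul_le_mul hABub hB hBnn (by positivity)
    have h3 : (((q:ℝ)^(t+1+1)/((q:ℝ)-1)) * ((q:ℝ)^(k-t+1)/((q:ℝ)-1))) * ((q:ℝ)^(k-t+1)/((q:ℝ)-1))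
        = (q:ℝ)^(2*k+4-t) / ((q:ℝ)-1)^3 := by
      rw [div_mul_div_comm, div_mul_div_comm, ← pow_add, ← pow_add]
      have e : (t+1+1) + (k-t+1) + (k-t+1) = 2*k+4-t := by omega
      rw [e]
      ring_nf
    linarith [h1, h2, h3.le, h3.ge]
  -- the common LHS upper bound
  have he12 : (m-1)*a + a = m*a := by
    have e : m - 1 + 1 = m := by omega
    calc (m-1)*a + a = ((m-1)+1)*a := by ring
    _ = m*a := by rw [e]
  have hLHS : 2 * gbin q (n-t-1) ((k:ℤ)-t-1) + C * gbin q (n-t-2) ((k:ℤ)-t-2)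
      ≤ 4*(q:ℝ)^(m*a) + ((q:ℝ)^(2*k+4-t)/((q:ℝ)-1)^3) * (2*(q:ℝ)^((m-1)*a)) := by
    have h1 : 2 * gbin q (n-t-1) ((k:ℤ)-t-1) ≤ 4*(q:ℝ)^(m*a) := by linarith
    have h2 : C * gbin q (n-t-2) ((k:ℤ)-t-2)
        ≤ ((q:ℝ)^(2*k+4-t)/((q:ℝ)-1)^3) * (2*(q:ℝ)^((m-1)*a)) :=
      mul_le_mul hC hG2ub hG2nn (by positivity)
    linarith
  constructor
  · -- Part 1 : k > 2t+2
    intro h2t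
    have hm3 : 3 ≤ m := by omega
    -- RHS lower bound
    have key : (k-t) + (k-t)*m + m*((a-1)-m) = m*a + (m+1) := by
      have h1 : k - t = m+1 := by omega
      obtain ⟨b, hb⟩ : ∃ b, (a-1)-m = b := ⟨_, rfl⟩
      have h3 : a = b + (m+1) := by omega
      rw [h1, hb, h3]
      ring
    have hth : (q:ℝ)^(k-t) ≤ theta q (k-t) := th_lb (k-t)
    have hR1 : (1/2) * (q:ℝ)^(m*a + (m+1))
        ≤ theta q (k+1) + theta q (k-t) * (q:ℝ)^((k-t)*m) * gbin q (a-1) ((k:ℤ)-t-1) := by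
      have hstep : ((q:ℝ)^(k-t) * (q:ℝ)^((k-t)*m)) * ((1/2)*(q:ℝ)^(m*((a-1)-m)))
          ≤ (theta q (k-t) * (q:ℝ)^((k-t)*m)) * gbin q (a-1) ((k:ℤ)-t-1) := by
        apply mul_le_mul
        · exact mul_le_mul_of_nonneg_right hth (by positivity)
        · exact hG3lb
        · positivity
        · have := th_nn (k-t); positivity
      have heq : ((q:ℝ)^(k-t) * (q:ℝ)^((k-t)*m)) * ((1/2)*(q:ℝ)^(m*((a-1)-m)))
          = (1/2) * (q:ℝ)^(m*a + (m+1)) := by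
        rw [← key, pow_add, pow_add]
        ring
      rw [heq] at hstep
      have hknn := th_nn (k+1)
      linarith
    -- final numeric comparison
    have hpow1 : (q:ℝ)^(m*a + (m+1)) = (q:ℝ)^(m*a) * (q:ℝ)^(m+1) := pow_add _ _ _
    have hA : 4*(q:ℝ)^(m*a) < (1/4) * ((q:ℝ)^(m*a) * (q:ℝ)^(m+1)) := by
      have h81 : (81:ℝ) ≤ (q:ℝ)^(m+1) := by
        calc (81:ℝ) = 3^4 := by norm_num
        _ ≤ (q:ℝ)^4 := by
            apply pow_le_pow_left₀ (by norm_num) hr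
        _ ≤ (q:ℝ)^(m+1) := pow_le_pow_right₀ hr1 (by omega)
      have hp : (0:ℝ) < (q:ℝ)^(m*a) := by positivity
      have h2 := mul_le_mul_of_nonneg_left h81 (le_of_lt hp)
      linarith
    have hB : ((q:ℝ)^(2*k+4-t)/((q:ℝ)-1)^3) * (2*(q:ℝ)^((m-1)*a))
        ≤ (1/4) * ((q:ℝ)^(m*a) * (q:ℝ)^(m+1)) := by
      have h8 : (8:ℝ) ≤ ((q:ℝ)-1)^3 := by
        calc (8:ℝ) = 2^3 := by norm_num
        _ ≤ ((q:ℝ)-1)^3 := pow_le_pow_left₀ (by norm_num) hrm 3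
      have hexp : (2*k+4-t) + (m-1)*a ≤ m*a + (m+1) := by
        have h' : (2*k+4-t) ≤ a + (m+1) := by omega
        calc (2*k+4-t) + (m-1)*a ≤ (a+(m+1)) + (m-1)*a := Nat.add_le_add_right h' _
        _ = ((m-1)*a + a) + (m+1) := by ring
        _ = m*a + (m+1) := by rw [he12]
      have hpowle : (q:ℝ)^((2*k+4-t) + (m-1)*a) ≤ (q:ℝ)^(m*a + (m+1)) :=
        pow_le_pow_right₀ hr1 hexp
      calc ((q:ℝ)^(2*k+4-t)/((q:ℝ)-1)^3) * (2*(q:ℝ)^((m-1)*a))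
          = (2*((q:ℝ)^((2*k+4-t) + (m-1)*a)))/((q:ℝ)-1)^3 := by
            rw [pow_add]; ring
      _ ≤ (2*((q:ℝ)^(m*a + (m+1))))/8 := by
            apply div_le_div₀ (by positivity) (by linarith) (by norm_num) h8
      _ = (1/4) * ((q:ℝ)^(m*a) * (q:ℝ)^(m+1)) := by rw [hpow1]; ring
    calc 2 * gbin q (n-t-1) ((k:ℤ)-t-1) + C * gbin q (n-t-2) ((k:ℤ)-t-2)
        ≤ 4*(q:ℝ)^(m*a) + ((q:ℝ)^(2*k+4-t)/((q:ℝ)-1)^3) * (2*(q:ℝ)^((m-1)*a)) := hLHS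
    _ < (1/2) * (q:ℝ)^(m*a + (m+1)) := by rw [hpow1]; linarith
    _ ≤ _ := hR1
  · -- Part 2 : k ≤ 2t+2
    intro hk2
    have hX : theta q (t+2) * ((q:ℝ)^a - 1)
        ≤ theta q (t+2) * (q:ℝ)^m * (((q:ℝ)^a - 1)/((q:ℝ)^m - 1)) := by
      have hqm : (3:ℝ) ≤ (q:ℝ)^m := by
        calc (3:ℝ) ≤ (q:ℝ) := hr
        _ = (q:ℝ)^1 := (pow_one _).symm
        _ ≤ (q:ℝ)^m := pow_le_pow_right₀ hr1 hm1
      have hqm0 : (0:ℝ) < (q:ℝ)^m - 1 := by linarith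
      have hqa1 : (0:ℝ) ≤ (q:ℝ)^a - 1 := by
        have : (1:ℝ) ≤ (q:ℝ)^a := one_le_pow₀ hr1
        linarith
      have h1 : ((q:ℝ)^a - 1) ≤ (q:ℝ)^m * (((q:ℝ)^a - 1)/((q:ℝ)^m - 1)) := by
        rw [mul_div_assoc', le_div_iff₀ hqm0]
        nlinarith
      calc theta q (t+2) * ((q:ℝ)^a - 1)
          ≤ theta q (t+2) * ((q:ℝ)^m * (((q:ℝ)^a - 1)/((q:ℝ)^m - 1))) :=
            mul_le_mul_of_nonneg_left h1 (th_nn (t+2))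
      _ = theta q (t+2) * (q:ℝ)^m * (((q:ℝ)^a - 1)/((q:ℝ)^m - 1)) := by ring
    have hXnn : (0:ℝ) ≤ theta q (t+2) * ((q:ℝ)^a - 1) := by
      have : (1:ℝ) ≤ (q:ℝ)^a := one_le_pow₀ hr1
      have := th_nn (t+2)
      nlinarith
    have hR2 : (1/2)*(q:ℝ)^((m-1)*a) * (theta q (t+2) * ((q:ℝ)^a - 1))
        ≤ gbin q (n-t-2) ((k:ℤ)-t-2) *
          (1 + theta q (t+2) * (q:ℝ)^m * (((q:ℝ)^a - 1)/((q:ℝ)^m - 1))) := by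
      have h1 : (1/2)*(q:ℝ)^((m-1)*a) * (theta q (t+2) * ((q:ℝ)^a - 1))
          ≤ gbin q (n-t-2) ((k:ℤ)-t-2) * (theta q (t+2) * ((q:ℝ)^a - 1)) :=
        mul_le_mul_of_nonneg_right hG2lb hXnn
      have h2 : gbin q (n-t-2) ((k:ℤ)-t-2) * (theta q (t+2) * ((q:ℝ)^a - 1))
          ≤ gbin q (n-t-2) ((k:ℤ)-t-2) *
            (1 + theta q (t+2) * (q:ℝ)^m * (((q:ℝ)^a - 1)/((q:ℝ)^m - 1))) := by
        apply mul_le_mul_of_nonneg_left _ hG2nn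
        calc theta q (t+2) * ((q:ℝ)^a - 1)
            ≤ theta q (t+2) * (q:ℝ)^m * (((q:ℝ)^a - 1)/((q:ℝ)^m - 1)) := hX
        _ ≤ 1 + theta q (t+2) * (q:ℝ)^m * (((q:ℝ)^a - 1)/((q:ℝ)^m - 1)) := by linarith
      linarith
    -- numeric part
    have hth2 : theta q (t+2) = ((q:ℝ)^(t+3) - 1)/((q:ℝ)-1) := by
      unfold theta; norm_num
    -- numeric facts
    have f2 : (8/9)*(q:ℝ)^a ≤ (q:ℝ)^a - 1 := by
      have h9 : (9:ℝ) ≤ (q:ℝ)^a := by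
        calc (9:ℝ) = 3^2 := by norm_num
        _ ≤ (q:ℝ)^2 := pow_le_pow_left₀ (by norm_num) hr 2
        _ ≤ (q:ℝ)^a := pow_le_pow_right₀ hr1 (by omega)
      linarith
    have f3 : (8/9)*(q:ℝ)^(t+3) ≤ (q:ℝ)^(t+3) - 1 := by
      have h9 : (9:ℝ) ≤ (q:ℝ)^(t+3) := by
        calc (9:ℝ) = 3^2 := by norm_num
        _ ≤ (q:ℝ)^2 := pow_le_pow_left₀ (by norm_num) hr 2
        _ ≤ (q:ℝ)^(t+3) := pow_le_pow_right₀ hr1 (by omega)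
      linarith
    have f4 : (27:ℝ) ≤ (q:ℝ)^(t+2) := by
      calc (27:ℝ) = 3^3 := by norm_num
      _ ≤ (q:ℝ)^3 := pow_le_pow_left₀ (by norm_num) hr 3
      _ ≤ (q:ℝ)^(t+2) := pow_le_pow_right₀ hr1 (by omega)
    have h45 : (4/9)*(q:ℝ)^2 ≤ ((q:ℝ)-1)^2 := by
      have f5 : (2/3)*(q:ℝ) ≤ (q:ℝ)-1 := by linarith
      have := mul_le_mul f5 f5 (by positivity) (by linarith)
      nlinarith
    -- A2
    have hA2 : 4*(q:ℝ)^(m*a)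
        ≤ (1/6)*(q:ℝ)^((m-1)*a) * (theta q (t+2) * ((q:ℝ)^a - 1)) := by
      have hs1 : (q:ℝ)^(t+2) * ((8/9)*(q:ℝ)^a) ≤ theta q (t+2) * ((q:ℝ)^a - 1) :=
        mul_le_mul (th_lb (t+2)) f2 (by positivity) (th_nn (t+2))
      have hmul := mul_le_mul_of_nonneg_left hs1
        (show (0:ℝ) ≤ (1/6)*(q:ℝ)^((m-1)*a) by positivity)
      have heq2 : (1/6)*(q:ℝ)^((m-1)*a) * ((q:ℝ)^(t+2) * ((8/9)*(q:ℝ)^a))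
          = (4/27) * ((q:ℝ)^(t+2) * (q:ℝ)^((m-1)*a + a)) := by
        rw [pow_add]; ring
      rw [he12] at heq2
      have h27 : 27*(q:ℝ)^(m*a) ≤ (q:ℝ)^(t+2) * (q:ℝ)^(m*a) :=
        mul_le_mul_of_nonneg_right f4 (by positivity)
      nlinarith [hmul, heq2, h27]
    -- B2
    have hpe2 : (0:ℝ) < (q:ℝ)^((m-1)*a) := by positivity
    have hB2 : ((q:ℝ)^(2*k+4-t)/((q:ℝ)-1)^3) * (2*(q:ℝ)^((m-1)*a))
        < (1/3)*(q:ℝ)^((m-1)*a) * (theta q (t+2) * ((q:ℝ)^a - 1)) := by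
      have hS : 2*((q:ℝ)^(2*k+4-t)/((q:ℝ)-1)^3) < (1/3)*(theta q (t+2) * ((q:ℝ)^a - 1)) := by
        rw [hth2]
        have hd3 : (0:ℝ) < ((q:ℝ)-1)^3 := by positivity
        rw [show 2*((q:ℝ)^(2*k+4-t)/((q:ℝ)-1)^3) = (2*(q:ℝ)^(2*k+4-t))/((q:ℝ)-1)^3 from by ring]
        rw [div_lt_iff₀ hd3]
        have hcanc : (1/3)*((((q:ℝ)^(t+3) - 1)/((q:ℝ)-1)) * ((q:ℝ)^a - 1))*((q:ℝ)-1)^3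
            = (1/3)*(((q:ℝ)^(t+3) - 1) * ((q:ℝ)^a - 1) * ((q:ℝ)-1)^2) := by
          field_simp
        rw [hcanc]
        -- product lower bound
        have hpr1 : ((8/9)*(q:ℝ)^(t+3)) * ((8/9)*(q:ℝ)^a)
            ≤ ((q:ℝ)^(t+3) - 1) * ((q:ℝ)^a - 1) :=
          mul_le_mul f3 f2 (by positivity) (le_trans (by positivity) f3)
        have hpr2 : (((8/9)*(q:ℝ)^(t+3)) * ((8/9)*(q:ℝ)^a)) * ((4/9)*(q:ℝ)^2)
            ≤ (((q:ℝ)^(t+3) - 1) * ((q:ℝ)^a - 1)) * ((q:ℝ)-1)^2 :=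
          mul_le_mul hpr1 h45 (by positivity)
            (mul_nonneg (le_trans (by positivity) f3) (le_trans (by positivity) f2))
        have heqp : (((8/9)*(q:ℝ)^(t+3)) * ((8/9)*(q:ℝ)^a)) * ((4/9)*(q:ℝ)^2)
            = (256/729) * (q:ℝ)^(a+t+5) := by
          rw [show a+t+5 = (t+3)+a+2 from by omega, pow_add, pow_add]
          ring
        have hexp2 : (2*k+4-t) + 3 ≤ a + t + 5 := by omega
        have hp27 : 27*(q:ℝ)^(2*k+4-t) ≤ (q:ℝ)^(a+t+5) := by
          calc 27*(q:ℝ)^(2*k+4-t) ≤ (q:ℝ)^3 * (q:ℝ)^(2*k+4-t) := by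
                have h27' : (27:ℝ) ≤ (q:ℝ)^3 := by
                  calc (27:ℝ) = 3^3 := by norm_num
                  _ ≤ (q:ℝ)^3 := pow_le_pow_left₀ (by norm_num) hr 3
                exact mul_le_mul_of_nonneg_right h27' (by positivity)
          _ = (q:ℝ)^((2*k+4-t)+3) := by rw [pow_add]; ring
          _ ≤ (q:ℝ)^(a+t+5) := pow_le_pow_right₀ hr1 hexp2
        have hposEC : (0:ℝ) < (q:ℝ)^(2*k+4-t) := by positivity
        nlinarith [hpr2, heqp, hp27, hposEC]
      have := mul_lt_mul_of_pos_right hS hpe2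
      nlinarith [this]
    -- conclude
    calc 2 * gbin q (n-t-1) ((k:ℤ)-t-1) + C * gbin q (n-t-2) ((k:ℤ)-t-2)
        ≤ 4*(q:ℝ)^(m*a) + ((q:ℝ)^(2*k+4-t)/((q:ℝ)-1)^3) * (2*(q:ℝ)^((m-1)*a)) := hLHS
    _ < (1/2)*(q:ℝ)^((m-1)*a) * (theta q (t+2) * ((q:ℝ)^a - 1)) := by linarith [hA2, hB2]
    _ ≤ _ := hR2
end
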